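/- Let d ≥ 2 and let u ∈ L²(μ₁ ⊗ ⋯ ⊗ μ_d) admit the tensor-train expansion u = Σ_{i₁=1}^∞ Σ_{i₂=1}^∞ ⋯ Σ_{i_{d−1}=1}^∞ λ_{i₁} λ_{i₁i₂} ⋯ λ_{i₁⋯i_{d−1}} T_{i₁⋯i_{d−1}} (convergence in L²), with a TT mode hierarchy and nonnegative coefficients λ_{i₁}, λ_{i₁i₂}, …, λ_{i₁⋯i_{d−1}}. Given truncation ranks r₁ ∈ ℕ and r_j = r_j(i₁,…,i_{j−1}) ∈ ℕ for j = 2,…,d−1, let ũ be the truncated expansion ũ = Σ_{i₁=1}^{r₁} Σ_{i₂=1}^{r₂} ⋯ Σ_{i_{d−1}=1}^{r_{d−1}} λ_{i₁} ⋯ λ_{i₁⋯i_{d−1}} T_{i₁⋯i_{d−1}}. Then the truncation error satisfies ‖u − ũ‖²_{L²} = Σ_{i₁=r₁+1}^∞ λ_{i₁}² + Σ_{i₁=1}^{r₁} Σ_{i₂=r₂+1}^∞ λ_{i₁}² λ_{i₁i₂}² + ⋯ + Σ_{i₁=1}^{r₁} Σ_{i₂=1}^{r₂} ⋯ Σ_{i_{d−2}=1}^{r_{d−2}}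 Σ_{i_{d−1}=r_{d−1}+1}^∞ λ_{i₁}² λ_{i₁i₂}² ⋯ λ_{i₁⋯i_{d−1}}². -/

import Mathlib

/-!
By Fubini, `⟪T_I, T_I'⟫ = ∏ⱼ ⟪ψ⁽ʲ⁾_I, ψ⁽ʲ⁾_I'⟫`; at the first level where `I` and `I'` differ the
two modes share their prefix and are therefore orthogonal, so the `T_I` are orthonormal and, by
Parseval, `‖u - ũ‖²` is the sum of the squared coefficients of the discarded multi-indices. Sort
these by the first level `m` with `i_m ≥ r_m`. That condition only involves `i₁, …, i_m`, so the
levels above `m` can be summed out one at a time, from the top down, using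
`Σ_{i_j} λ_{i₁⋯i_j}² = 1`, which leaves the level-`m` term. All sums are taken in `ℝ≥0∞`, where
they can be rearranged freely, and converted back to `ℝ` at the end.
-/

open MeasureTheory ENNReal Function

theorem exists_not_and_forall_lt_of_not_forall {ι : Type*} [LinearOrder ι] [WellFoundedLT ι]
    {p : ι → Prop} (h : ¬ ∀ j, p j) : ∃ k, ¬ p k ∧ ∀ l < k, p l := by
  rw [not_forall] at h
  obtain ⟨k, hk, hmin⟩ := wellFounded_lt.has_min {k | ¬ p k} h
  exact ⟨k, hk, fun l hl => by_contra fun hl' => hmin l hl' hl⟩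

theorem Orthonormal.hasSum_sq_of_hasSum {ι E : Type*} [NormedAddCommGroup E]
    [InnerProductSpace ℝ E] {v : ι → E} (hv : Orthonormal ℝ v) {c : ι → ℝ} {x : E}
    (hx : HasSum (fun i => c i • v i) x) : HasSum (fun i => c i ^ 2) (‖x‖ ^ 2) := by
  classical
  have hc : ∀ i, inner ℝ x (v i) = c i := by
    intro i
    have hsingle : HasSum (fun j => inner ℝ (v i) (c j • v j)) (c i) := by
      convert hasSum_ite_eq i (c i) using 1
      ext j
      by_cases hji : j = i
      · simp [hji, real_inner_smul_right, hv.1 i]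
      · simp [hji, real_inner_smul_right, hv.inner_eq_zero (Ne.symm hji)]
    rw [real_inner_comm]
    exact (hx.mapL (innerSL ℝ (v i))).unique hsingle
  simpa [real_inner_smul_right, hc, ← sq, real_inner_self_eq_norm_sq] using
    hx.mapL (innerSL ℝ x)

theorem L2.inner_eq_prod_inner_of_ae_eq_prod {ι : Type*} [Fintype ι] {Ω : ι → Type*}
    [∀ i, MeasurableSpace (Ω i)] {μ : ∀ i, Measure (Ω i)} [∀ i, SigmaFinite (μ i)]
    {f g : Lp ℝ 2 (Measure.pi μ)} {φ γ : ∀ i, Lp ℝ 2 (μ i)}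
    (hf : f =ᵐ[Measure.pi μ] fun x => ∏ i, φ i (x i))
    (hg : g =ᵐ[Measure.pi μ] fun x => ∏ i, γ i (x i)) :
    inner ℝ f g = ∏ i, inner ℝ (φ i) (γ i) := by
  simp only [L2.inner_def, RCLike.inner_apply, conj_trivial]
  rw [← integral_fintype_prod_eq_prod]
  refine integral_congr_ae ?_
  filter_upwards [hf, hg] with x hfx hgx
  rw [hfx, hgx, Finset.prod_mul_distrib]

namespace TensorTrain

variable {d : ℕ} {E : Fin d → Type*} [∀ j, NormedAddCommGroup (E j)]
  [∀ j, InnerProductSpace ℝ (E j)] {ψ : (j : Fin d) → (Fin (d - 1) → ℕ) → E j}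

theorem norm_mode_eq_one (hd : 0 < d)
    (hortho : ∀ (j : Fin d) (h : (j : ℕ) < d - 1) (I : Fin (d - 1) → ℕ),
      Orthonormal ℝ (fun n : ℕ => ψ j (update I ⟨(j : ℕ), h⟩ n)))
    (hlast : ∀ I : Fin (d - 1) → ℕ, ‖ψ ⟨d - 1, by omega⟩ I‖ = 1) (j : Fin d)
    (I : Fin (d - 1) → ℕ) : ‖ψ j I‖ = 1 := by
  by_cases hj : (j : ℕ) < d - 1
  · simpa using (hortho j hj I).1 (I ⟨j, hj⟩)
  · rw [show j = ⟨d - 1, by omega⟩ from Fin.ext (by dsimp only; omega)]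
    exact hlast I

theorem inner_mode_eq_zero_of_ne_of_forall_lt_eq
    (hdep : ∀ (j : Fin d) (I I' : Fin (d - 1) → ℕ),
      (∀ k : Fin (d - 1), (k : ℕ) ≤ min (j : ℕ) (d - 2) → I k = I' k) → ψ j I = ψ j I')
    (hortho : ∀ (j : Fin d) (h : (j : ℕ) < d - 1) (I : Fin (d - 1) → ℕ),
      Orthonormal ℝ (fun n : ℕ => ψ j (update I ⟨(j : ℕ), h⟩ n)))
    {I I' : Fin (d - 1) → ℕ} {k : Fin (d - 1)} (hk : I k ≠ I' k)
    (hlt : ∀ l < k, I l = I' l) :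
    inner ℝ (ψ (Fin.castLE (Nat.sub_le d 1) k) I) (ψ (Fin.castLE (Nat.sub_le d 1) k) I') = 0 := by
  have hI : ψ (Fin.castLE (Nat.sub_le d 1) k) I =
      ψ (Fin.castLE (Nat.sub_le d 1) k) (update I' k (I k)) := by
    refine hdep _ _ _ fun l hl => ?_
    rcases lt_or_eq_of_le (Fin.le_iff_val_le_val.mpr (hl.trans (min_le_left _ _))) with hl | rfl
    · rw [update_of_ne hl.ne, hlt l hl]
    · rw [update_self]
  rw [hI, show ψ (Fin.castLE (Nat.sub_le d 1) k) I' =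
    ψ (Fin.castLE (Nat.sub_le d 1) k) (update I' k (I' k)) by rw [update_eq_self]]
  exact (hortho (Fin.castLE (Nat.sub_le d 1) k) k.isLt I').2 hk

theorem prod_inner_mode_eq_ite (hd : 0 < d)
    (hdep : ∀ (j : Fin d) (I I' : Fin (d - 1) → ℕ),
      (∀ k : Fin (d - 1), (k : ℕ) ≤ min (j : ℕ) (d - 2) → I k = I' k) → ψ j I = ψ j I')
    (hortho : ∀ (j : Fin d) (h : (j : ℕ) < d - 1) (I : Fin (d - 1) → ℕ),
      Orthonormal ℝ (fun n : ℕ => ψ j (update I ⟨(j : ℕ), h⟩ n)))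
    (hlast : ∀ I : Fin (d - 1) → ℕ, ‖ψ ⟨d - 1, by omega⟩ I‖ = 1) (I I' : Fin (d - 1) → ℕ) :
    ∏ j, inner ℝ (ψ j I) (ψ j I') = if I = I' then 1 else 0 := by
  split_ifs with h
  · subst h
    simp [norm_mode_eq_one hd hortho hlast]
  · obtain ⟨k, hk, hlt⟩ := exists_not_and_forall_lt_of_not_forall fun h' => h (funext h')
    exact Finset.prod_eq_zero (Finset.mem_univ _)
      (inner_mode_eq_zero_of_ne_of_forall_lt_eq hdep hortho hk hlt)

end TensorTrain

theorem Finset.sum_ite_forall_lt_and_not {ι M : Type*} [Fintype ι] [LinearOrder ι]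
    [AddCommMonoid M] (p : ι → Prop) [DecidablePred p] [Decidable (∀ j, p j)] (x : M) :
    ∑ m, (if (∀ j < m, p j) ∧ ¬ p m then x else 0) = if ∀ j, p j then 0 else x := by
  split_ifs with h
  · exact Finset.sum_eq_zero fun m _ => if_neg fun hm => hm.2 (h m)
  · obtain ⟨k, hk, hlt⟩ := exists_not_and_forall_lt_of_not_forall h
    rw [Finset.sum_eq_single k (fun m _ hmk => if_neg fun hm => ?_) (by simp), if_pos ⟨hlt, hk⟩]
    rcases lt_or_gt_of_ne hmk with hmk | hmk
    exacts [hm.2 (hlt m hmk), hk (hm.1 k hmk)]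

theorem ENNReal.tsum_ofReal_eq_of_hasSum {α : Type*} {f : α → ℝ} {a : ℝ} (hf : ∀ n, 0 ≤ f n)
    (h : HasSum f a) : ∑' n, ENNReal.ofReal (f n) = ENNReal.ofReal a := by
  rw [← h.tsum_eq, ENNReal.ofReal_tsum_of_nonneg hf h.summable]

theorem eq_sum_tsum_of_ofReal_eq {ι κ : Type*} {s : Finset ι} {a : ℝ} {f : ι → κ → ℝ}
    (ha : 0 ≤ a) (hf : ∀ m I, 0 ≤ f m I)
    (h : ENNReal.ofReal a = ∑ m ∈ s, ∑' I, ENNReal.ofReal (f m I)) :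
    a = ∑ m ∈ s, ∑' I, f m I := by
  have hfin : ∀ m ∈ s, ∑' I, ENNReal.ofReal (f m I) ≠ ⊤ :=
    ENNReal.sum_ne_top.mp (h ▸ ENNReal.ofReal_ne_top)
  rw [← ENNReal.toReal_ofReal ha, h, ENNReal.toReal_sum hfin]
  refine Finset.sum_congr rfl fun m _ => ?_
  rw [ENNReal.tsum_toReal_eq fun _ => ENNReal.ofReal_ne_top]
  simp only [ENNReal.toReal_ofReal (hf m _)]

theorem ENNReal.tsum_eq_tsum_ite_tsum_update {ι α : Type*} [DecidableEq ι] [DecidableEq α]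
    (k : ι) (a : α) (f : (ι → α) → ℝ≥0∞) :
    ∑' I, f I = ∑' I, if I k = a then ∑' n, f (update I k n) else 0 := by
  let e := Equiv.funSplitAt k α
  have hupdate : ∀ n m g, update (e.symm (m, g)) k n = e.symm (n, g) := by
    intro n m g
    ext j
    by_cases hj : j = k <;> simp [e, hj]
  rw [← e.symm.tsum_eq, ← e.symm.tsum_eq, ENNReal.tsum_prod', ENNReal.tsum_prod',
    ENNReal.tsum_comm, ENNReal.tsum_comm (f := fun n g => ite _ _ _)]
  refine tsum_congr fun g => ?_
  rw [tsum_eq_single a fun n hn => if_neg (by simpa [e] using hn)]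
  simp [e, hupdate]

theorem ENNReal.tsum_mul_eq_tsum_ite_of_tsum_update_eq_one {ι α : Type*} [DecidableEq ι]
    [DecidableEq α] (k : ι) (a : α) {g w : (ι → α) → ℝ≥0∞} (hg : DependsOn g {k}ᶜ)
    (hw : ∀ I, ∑' n, w (update I k n) = 1) :
    ∑' I, g I * w I = ∑' I, if I k = a then g I else 0 := by
  rw [ENNReal.tsum_eq_tsum_ite_tsum_update k a]
  refine tsum_congr fun I => ?_
  have hgI : ∀ n, g (update I k n) = g I := fun n =>
    hg fun j hj => update_of_ne hj n I
  simp only [hgI, ENNReal.tsum_mul_left, hw, mul_one]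

theorem ENNReal.tsum_mul_prod_eq_tsum_ite {ι α : Type*} [LinearOrder ι] [DecidableEq α] (a : α)
    (S : Finset ι) {g : (ι → α) → ℝ≥0∞} {w : ι → (ι → α) → ℝ≥0∞}
    (hg : DependsOn g (↑S)ᶜ) (hw_dep : ∀ j ∈ S, DependsOn (w j) (Set.Iic j))
    (hw : ∀ j ∈ S, ∀ I, ∑' n, w j (update I j n) = 1) :
    ∑' I, g I * ∏ j ∈ S, w j I = ∑' I, if ∀ j ∈ S, I j = a then g I else 0 := by
  induction S using Finset.induction_on_max generalizing g with
  | empty => simp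
  | insert k S hlt ih =>
    have hk : k ∉ S := fun h => lt_irrefl k (hlt k h)
    -- `k` is the largest coordinate in play, so no factor but `w k` depends on it.
    have hdep : DependsOn (fun I => g I * ∏ j ∈ S, w j I) {k}ᶜ := by
      intro I I' h
      refine congrArg₂ (· * ·) (hg.mono ?_ h) (Finset.prod_congr rfl fun j hj => hw_dep j
        (Finset.mem_insert_of_mem hj) fun i hi => h i (ne_of_lt (lt_of_le_of_lt hi (hlt j hj))))
      simp
    calc ∑' I, g I * ∏ j ∈ insert k S, w j I
        = ∑' I, (g I * ∏ j ∈ S, w j I) * w k I := by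
          simp only [Finset.prod_insert hk, mul_comm (w k _), mul_assoc]
      _ = ∑' I, (if I k = a then g I else 0) * ∏ j ∈ S, w j I := by
          rw [ENNReal.tsum_mul_eq_tsum_ite_of_tsum_update_eq_one k a hdep
            (hw k (Finset.mem_insert_self k S))]
          simp only [ite_mul, zero_mul]
      _ = ∑' I, if ∀ j ∈ insert k S, I j = a then g I else 0 := by
          rw [ih]
          · refine tsum_congr fun I => ?_
            by_cases hIk : I k = a <;> simp [hIk]
          · intro I I' h
            have hkk : I k = I' k := h k (by simpa using hk)
            simp only [hkk, hg.mono (by simp) h]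
          · exact fun j hj => hw_dep j (Finset.mem_insert_of_mem hj)
          · exact fun j hj => hw j (Finset.mem_insert_of_mem hj)

theorem dependsOn_forall_lt_lt_and_le {ι : Type*} [LinearOrder ι] {r : ι → (ι → ℕ) → ℕ}
    (hr : ∀ j, DependsOn (r j) (Set.Iio j)) (m : ι) :
    DependsOn (fun I => (∀ j, j < m → I j < r j I) ∧ r m I ≤ I m) (Set.Iic m) := by
  intro I I' h
  have hrI : ∀ j ≤ m, r j I = r j I' := fun j hj =>
    hr j fun k hk => h k (le_of_lt (lt_of_lt_of_le hk hj))
  simp only [h m le_rfl, hrI m le_rfl]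
  congr 1
  exact propext (forall₂_congr fun j hj => by rw [h j hj.le, hrI j hj.le])

theorem tsum_ofReal_ite_prod_sq_eq_of_tsum_sq_eq_one {ι : Type*} [Fintype ι] [LinearOrder ι]
    (m : ι) {A : (ι → ℕ) → Prop} [DecidablePred A] (hA : DependsOn A (Set.Iic m))
    {lam : ι → (ι → ℕ) → ℝ} (hlam_dep : ∀ j, DependsOn (lam j) (Set.Iic j))
    (hlam_unit : ∀ j, m < j → ∀ I, HasSum (fun n => lam j (update I j n) ^ 2) 1) :
    ∑' I, ENNReal.ofReal (if A I then ∏ j, lam j I ^ 2 else 0) =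
      ∑' I, ENNReal.ofReal (if A I ∧ (∀ j, m < j → I j = 0) then
        ∏ j ∈ Finset.univ.filter (· ≤ m), lam j I ^ 2 else 0) := by
  set w : ι → (ι → ℕ) → ℝ≥0∞ := fun j I => ENNReal.ofReal (lam j I ^ 2)
  set S := Finset.univ.filter (m < ·)
  set g : (ι → ℕ) → ℝ≥0∞ := fun I => if A I then ∏ j ∈ Finset.univ.filter (· ≤ m), w j I else 0
  have hsplit : ∀ I, ENNReal.ofReal (if A I then ∏ j, lam j I ^ 2 else 0) =
      g I * ∏ j ∈ S, w j I := by
    intro I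
    split_ifs with hI
    · rw [ENNReal.ofReal_prod_of_nonneg fun j _ => sq_nonneg _,
        ← Finset.prod_filter_mul_prod_filter_not Finset.univ (· ≤ m)]
      simp only [not_le, g, w, S, if_pos hI]
    · simp [g, hI]
  have hg : DependsOn g (↑S)ᶜ := by
    have hS : (↑S : Set ι)ᶜ = Set.Iic m := by ext j; simp [S]
    intro I I' h
    rw [hS] at h
    simp only [g, hA h]
    congr 1
    refine Finset.prod_congr rfl fun j hj => ?_
    simp only [w, hlam_dep j fun i hi => h i (le_trans hi (Finset.mem_filter.mp hj).2)]
  simp only [hsplit]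
  rw [ENNReal.tsum_mul_prod_eq_tsum_ite 0 S hg (fun j _ => ?_) (fun j hj I => ?_)]
  · refine tsum_congr fun I => ?_
    simp only [g, w, S, Finset.mem_filter, Finset.mem_univ, true_and]
    split_ifs <;> simp_all [ENNReal.ofReal_prod_of_nonneg fun j _ => sq_nonneg (lam j I)]
  · exact fun I I' h => by simp only [w, hlam_dep j h]
  · exact ENNReal.tsum_ofReal_eq_of_hasSum (fun _ => sq_nonneg _)
      (hlam_unit j (Finset.mem_filter.mp hj).2 I) |>.trans ENNReal.ofReal_one

/-- **Proposition: TT truncation error.** Let `u ∈ L²(μ₁ ⊗ ⋯ ⊗ μ_d)` admit the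
tensor-train expansion `u = Σ_I λ_{i₁} λ_{i₁i₂} ⋯ λ_{i₁⋯i_{d-1}} T_I` (convergence in `L²`),
where `(T_I)` is the orthonormal family of products of a TT mode hierarchy, the nonnegative
level-`j` coefficient `λ_{i₁⋯i_j}` depends only on the first `j` components of the
multi-index, and (as produced by recursive bi-orthogonal decomposition of unit-norm modes)
`Σ_{i_j} λ_{i₁⋯i_j}² = 1` for each level `j ≥ 2` and each fixed prefix.  Given truncation
ranks `r_j = r_j(i₁,…,i_{j-1})` and the truncated expansion `ũ = Σ_{I : i_j < r_j} (∏ λ) T_I`,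
the truncation error is
`‖u − ũ‖² = Σ_{m=1}^{d-1} Σ_{i₁<r₁} ⋯ Σ_{i_{m-1}<r_{m-1}} Σ_{i_m ≥ r_m} λ_{i₁}² ⋯ λ_{i₁⋯i_m}²`,
where the inner sum at level `m` is encoded as a `tsum` over multi-indices whose components
beyond `m` are pinned to `0`. -/
theorem tensorTrain_truncation_error
    (d : ℕ) (hd : 2 ≤ d)
    (Ω : Fin d → Type*) [∀ j, MeasurableSpace (Ω j)]
    (μ : ∀ j, Measure (Ω j)) [∀ j, SigmaFinite (μ j)]
    -- the TT mode hierarchy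
    (ψ : (j : Fin d) → (Fin (d - 1) → ℕ) → Lp ℝ 2 (μ j))
    (hdep : ∀ (j : Fin d) (I I' : Fin (d - 1) → ℕ),
      (∀ k : Fin (d - 1), (k : ℕ) ≤ min (j : ℕ) (d - 2) → I k = I' k) → ψ j I = ψ j I')
    (hortho : ∀ (j : Fin d) (h : (j : ℕ) < d - 1) (I : Fin (d - 1) → ℕ),
      Orthonormal ℝ (fun n : ℕ => ψ j (Function.update I ⟨(j : ℕ), h⟩ n)))
    (hlast : ∀ I : Fin (d - 1) → ℕ, ‖ψ ⟨d - 1, by omega⟩ I‖ = 1)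
    (T : (Fin (d - 1) → ℕ) → Lp ℝ 2 (Measure.pi μ))
    (hT : ∀ I, ⇑(T I) =ᵐ[Measure.pi μ] fun x : (j : Fin d) → Ω j => ∏ j, (ψ j I) (x j))
    -- the nonnegative coefficients, level j depending only on components ≤ j
    (lam : Fin (d - 1) → (Fin (d - 1) → ℕ) → ℝ)
    (hlam_dep : ∀ (j : Fin (d - 1)) (I I' : Fin (d - 1) → ℕ),
      (∀ k : Fin (d - 1), k ≤ j → I k = I' k) → lam j I = lam j I')
    (hlam_unit : ∀ j : Fin (d - 1), 0 < (j : ℕ) → ∀ I : Fin (d - 1) → ℕ,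
      HasSum (fun n : ℕ => (lam j (Function.update I j n)) ^ 2) 1)
    -- the truncation ranks, level j depending only on components < j
    (r : Fin (d - 1) → (Fin (d - 1) → ℕ) → ℕ)
    (hr_dep : ∀ (j : Fin (d - 1)) (I I' : Fin (d - 1) → ℕ),
      (∀ k : Fin (d - 1), k < j → I k = I' k) → r j I = r j I')
    -- the full and truncated expansions
    (u v : Lp ℝ 2 (Measure.pi μ))
    (hu : HasSum (fun I : Fin (d - 1) → ℕ => (∏ j, lam j I) • T I) u)
    (hv : HasSum (fun I : Fin (d - 1) → ℕ =>
      (if ∀ j, I j < r j I then (∏ j, lam j I) else 0) • T I) v) :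
    ‖u - v‖ ^ 2 =
      ∑ m : Fin (d - 1), ∑' I : Fin (d - 1) → ℕ,
        if (∀ j, j < m → I j < r j I) ∧ r m I ≤ I m ∧ (∀ j, m < j → I j = 0) then
          ∏ j ∈ Finset.univ.filter (· ≤ m), (lam j I) ^ 2
        else 0 := by
  have hTon : Orthonormal ℝ T := orthonormal_iff_ite.mpr fun I I' =>
    (L2.inner_eq_prod_inner_of_ae_eq_prod (hT I) (hT I')).trans
      (TensorTrain.prod_inner_mode_eq_ite (by omega) hdep hortho hlast I I')
  have huv : HasSum (fun I => (if ∀ j, I j < r j I then 0 else ∏ j, lam j I) • T I) (u - v) := by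
    convert hu.sub hv using 2 with I
    split_ifs <;> simp
  set A : Fin (d - 1) → (Fin (d - 1) → ℕ) → Prop :=
    fun m I => (∀ j, j < m → I j < r j I) ∧ r m I ≤ I m
  have hsq_eq_sum : ∀ I, ENNReal.ofReal ((if ∀ j, I j < r j I then 0 else ∏ j, lam j I) ^ 2) =
      ∑ m, ENNReal.ofReal (if A m I then ∏ j, lam j I ^ 2 else 0) := by
    intro I
    rw [← ENNReal.ofReal_sum_of_nonneg fun m _ => by positivity]
    congr 1
    simpa [A, not_lt, apply_ite (· ^ 2), Finset.prod_pow] using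
      (Finset.sum_ite_forall_lt_and_not (fun j => I j < r j I) ((∏ j, lam j I) ^ 2)).symm
  refine eq_sum_tsum_of_ofReal_eq (sq_nonneg _) (fun m I => by positivity) ?_
  rw [← ENNReal.tsum_ofReal_eq_of_hasSum (fun _ => sq_nonneg _) (hTon.hasSum_sq_of_hasSum huv)]
  rw [tsum_congr hsq_eq_sum, Summable.tsum_finsetSum fun _ _ => ENNReal.summable]
  refine Finset.sum_congr rfl fun m _ => ?_
  simpa only [A, and_assoc] using tsum_ofReal_ite_prod_sq_eq_of_tsum_sq_eq_one m
    (dependsOn_forall_lt_lt_and_le (fun j I I' h => hr_dep j I I' h) m)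
    (fun j I I' h => hlam_dep j I I' h) fun j hj => hlam_unit j ((Nat.zero_le _).trans_lt hj)
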